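/- arXiv:1912.12523 — 3 statements merged into one kernel-verified Lean document; each statement's English description precedes it below -/
import Mathlib

section
/- Let M be a proper geodesic metric space with base point o, let U be a bounded open subset of M containing a point x, and suppose (x_n) is a sequence in M \ U with d(x_n, o) → ∞. If U ⊂ B(o,r) and d(x_n,o) ≥ 2r+1 for all n, then for each n there exists a point y_n on a geodesic segment from x to x_n with d(x,y_n) = d(x,o)+1 and ξ_{x_n}(y_n) - ξ_x(y_n) ≥ 2. In particular, ξ_{x_n} does not converge to ξ_x uniformly on compact sets. -/
open Filter

/-- In a proper geodesic metric space `M` with base point `o`, if `U` is a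
bounded open set containing `x`, `U ⊆ B(o,r)`, and `(x_n)` is a sequence in `M \ U` with
`d(x_n,o) ≥ 2r+1` for all `n` (and `d(x_n,o) → ∞`), then for each `n` there is a point
`y_n` on a geodesic from `x` to `x_n` with `d(x,y_n) = d(x,o)+1` and
`ξ_{x_n}(y_n) - ξ_x(y_n) ≥ 2`; in particular `ξ_{x_n}` does not converge to `ξ_x`
uniformly on compact sets.  Here `ξ_z(y) = d(z,o) - d(z,y)`. -/
theorem stmt3 {M : Type*} [MetricSpace M] [ProperSpace M]
    (hgeo : ∀ a b : M, ∀ t : ℝ, 0 ≤ t → t ≤ dist a b →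
      ∃ z : M, dist a z = t ∧ dist z b = dist a b - t)
    (o : M) (r : ℝ) (U : Set M) (hUopen : IsOpen U) (hUbdd : Bornology.IsBounded U)
    (hUr : U ⊆ Metric.ball o r) (x : M) (hx : x ∈ U)
    (xs : ℕ → M) (hxs : ∀ n, xs n ∉ U)
    (hfar : ∀ n, dist (xs n) o ≥ 2 * r + 1)
    (hinf : Tendsto (fun n => dist (xs n) o) atTop atTop) :
    (∀ n : ℕ, ∃ y : M,
      dist x y = dist x o + 1 ∧
      dist x y + dist y (xs n) = dist x (xs n) ∧
      (dist (xs n) o - dist (xs n) y) - (dist x o - dist x y) ≥ 2) ∧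
    ¬ ∀ K : Set M, IsCompact K →
        TendstoUniformlyOn (fun n => fun y : M => dist (xs n) o - dist (xs n) y)
          (fun y : M => dist x o - dist x y) atTop K := by
  have hxr : dist x o < r := by simpa [Metric.mem_ball] using hUr hx
  have key : ∀ n : ℕ, ∃ y : M,
      dist x y = dist x o + 1 ∧
      dist x y + dist y (xs n) = dist x (xs n) ∧
      (dist (xs n) o - dist (xs n) y) - (dist x o - dist x y) ≥ 2 := by
    intro n
    have hf := hfar n
    have ht1 : dist (xs n) o ≤ dist (xs n) x + dist x o := dist_triangle _ _ _
    have hc1 : dist (xs n) x = dist x (xs n) := dist_comm _ _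
    have h1 : dist x o + 1 ≤ dist x (xs n) := by linarith
    obtain ⟨y, hy1, hy2⟩ := hgeo x (xs n) (dist x o + 1) (by positivity) h1
    have hc2 : dist y (xs n) = dist (xs n) y := dist_comm _ _
    have ht2 : dist x (xs n) ≤ dist x o + dist o (xs n) := dist_triangle _ _ _
    have hc3 : dist o (xs n) = dist (xs n) o := dist_comm _ _
    exact ⟨y, hy1, by linarith, by linarith⟩
  refine ⟨key, fun h => ?_⟩
  have hK : IsCompact (Metric.closedBall x (dist x o + 1)) :=
    isCompact_closedBall x _
  have hu := (Metric.tendstoUniformlyOn_iff.mp (h _ hK)) 1 one_pos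
  obtain ⟨n, hn⟩ := hu.exists
  obtain ⟨y, hy1, _, hy3⟩ := key n
  have hyK : y ∈ Metric.closedBall x (dist x o + 1) := by
    simp [Metric.mem_closedBall, dist_comm y x, hy1]
  have := hn y hyK
  rw [Real.dist_eq, abs_lt] at this
  linarith
end

section
/- In the hyperbolic plane (upper half-plane model with base point o = i), for every boundary horofunction ξ and every r > 0, the set {z ∈ H² : ξ(z) + d(o,z) > r} is contained in a cone at o of visual angle at most 4·arctan((e^r − 1)^{−1/2}). -/
/-!
The Cayley transform `cayley z = (z - i) / (z + i)` maps `ℍ` onto the unit disc, sending `i` to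
`0` and geodesic rays from `i` to radii. In the disc, the exponential of the Gromov product
`(z · w)_i` is `(1 + |u|)(1 + |v|) / (|u - v| + |1 - u v̄|)` with `u = cayley z`, `v = cayley w`.
Along a subsequence `cayley (z n)` tends to a point `ζ` of the unit circle, so the horofunction
satisfies `exp ((ξ w + d(i, w)) / 2) = (1 + |v|) / |ζ - v|`. If this exceeds `exp (r / 2)`, then
writing `v / ζ = s e^{iψ}`, the estimate `|ζ - v| = |1 - s e^{iψ}| ≥ (1 + s) |sin (ψ / 2)|` gives
`|sin (ψ / 2)| < exp (-r / 2)`, i.e. `|ψ| ≤ 2 arcsin (exp (-r / 2)) = 2 arctan ((e^r - 1)^{-1/2})`.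
-/

open Filter Topology Real

open scoped UpperHalfPlane ComplexConjugate

lemma Real.tendsto_tanh_atTop : Tendsto tanh atTop (𝓝 1) := by
  have h : tanh = fun x => 1 - 2 / (exp (2 * x) + 1) := funext fun x => by
    rw [tanh_eq, two_mul, exp_add, exp_neg]
    field_simp
    ring
  have hden : Tendsto (fun x : ℝ => exp (2 * x) + 1) atTop atTop :=
    tendsto_atTop_add_const_right _ 1 (tendsto_exp_atTop.comp (tendsto_id.const_mul_atTop two_pos))
  rw [h]
  simpa using tendsto_const_nhds.sub (tendsto_const_nhds.div_atTop hden)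

lemma Real.arctan_one_div_sqrt_exp_sub_one {r : ℝ} (hr : 0 < r) :
    arctan (1 / √(exp r - 1)) = arcsin (exp (-(r / 2))) := by
  have he : 0 < exp r - 1 := by linarith [add_one_lt_exp hr.ne']
  rw [arctan_eq_arcsin, div_pow, one_pow, sq_sqrt he.le,
    show 1 + 1 / (exp r - 1) = exp r / (exp r - 1) by field_simp; ring,
    sqrt_div (exp_pos r).le, div_div_div_cancel_right₀ (sqrt_pos.2 he).ne', exp_neg, exp_half,
    one_div]

lemma Real.abs_le_two_mul_arcsin_of_abs_sin_half_le {ψ a : ℝ} (hψ : |ψ| ≤ π)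
    (h : |sin (ψ / 2)| ≤ a) : |ψ| ≤ 2 * arcsin a := by
  have hψ2 : |ψ / 2| ≤ π / 2 := by rw [abs_div, abs_two]; linarith
  rw [abs_sin_eq_sin_abs_of_abs_le_pi (by linarith [pi_pos])] at h
  have := arcsin_le_arcsin h
  rw [arcsin_sin (by linarith [abs_nonneg (ψ / 2)]) hψ2, abs_div, abs_two] at this
  linarith

lemma Complex.one_add_norm_mul_abs_sin_half_arg_le (u : ℂ) :
    (1 + ‖u‖) * |Real.sin (arg u / 2)| ≤ ‖1 - u‖ := by
  have hre : u.re = ‖u‖ * Real.cos (arg u) := (norm_mul_cos_arg u).symm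
  have hsq : ‖1 - u‖ ^ 2 = 1 - 2 * u.re + ‖u‖ ^ 2 := by
    rw [← normSq_eq_norm_sq, ← normSq_eq_norm_sq, normSq_apply, normSq_apply]
    simp only [sub_re, one_re, sub_im, one_im]
    ring
  have hsin : Real.sin (arg u / 2) ^ 2 = (1 - Real.cos (arg u)) / 2 := by
    rw [Real.sin_sq_eq_half_sub, mul_div_cancel₀ _ two_ne_zero]; ring
  rw [← pow_le_pow_iff_left₀ (by positivity) (norm_nonneg _) two_ne_zero, mul_pow, sq_abs, hsin,
    hsq, hre]
  nlinarith [mul_nonneg (sq_nonneg (1 - ‖u‖)) (by linarith [Real.neg_one_le_cos (arg u)] :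
    (0 : ℝ) ≤ 1 + Real.cos (arg u))]

lemma abs_arg_div_le_of_norm_sub_mul_exp_le {ζ v : ℂ} {r : ℝ} (hζ : ‖ζ‖ = 1)
    (hr : 0 < r) (h : ‖ζ - v‖ * exp (r / 2) ≤ 1 + ‖v‖) :
    |Complex.arg (v / ζ)| ≤ 2 * arctan (1 / √(exp r - 1)) := by
  rw [arctan_one_div_sqrt_exp_sub_one hr]
  refine abs_le_two_mul_arcsin_of_abs_sin_half_le (Complex.abs_arg_le_pi _) ?_
  have hsin := Complex.one_add_norm_mul_abs_sin_half_arg_le (v / ζ)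
  rw [one_sub_div (norm_pos_iff.1 (hζ ▸ one_pos)), norm_div, norm_div, hζ, div_one,
    div_one] at hsin
  rw [exp_neg, inv_eq_one_div, le_div_iff₀ (exp_pos _)]
  have hv : 0 < 1 + ‖v‖ := by positivity
  refine le_of_mul_le_mul_left ?_ hv
  calc (1 + ‖v‖) * (|Real.sin (Complex.arg (v / ζ) / 2)| * exp (r / 2))
      ≤ ‖ζ - v‖ * exp (r / 2) := by rw [← mul_assoc]; gcongr
    _ ≤ (1 + ‖v‖) * 1 := by rwa [mul_one]

namespace UpperHalfPlane

noncomputable def cayley (z : ℍ) : ℂ := ((z : ℂ) - Complex.I) / ((z : ℂ) + Complex.I)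

@[simp] lemma cayley_I : cayley I = 0 := by simp [cayley]

lemma coe_add_I_ne_zero (z : ℍ) : (z : ℂ) + Complex.I ≠ 0 := by
  refine ne_of_apply_ne Complex.im ?_
  rw [Complex.add_im, Complex.I_im, Complex.zero_im, coe_im]
  linarith [z.im_pos]

lemma one_sub_norm_cayley_sq (z : ℍ) :
    1 - ‖cayley z‖ ^ 2 = 4 * z.im / ‖(z : ℂ) + Complex.I‖ ^ 2 := by
  have h := coe_add_I_ne_zero z
  rw [cayley, norm_div, div_pow, eq_div_iff (by positivity), sub_mul, one_mul,
    div_mul_cancel₀ _ (by positivity)]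
  simp only [← Complex.normSq_eq_norm_sq, Complex.normSq_apply]
  simp only [Complex.add_re, Complex.add_im, Complex.sub_re, Complex.sub_im, Complex.I_re,
    Complex.I_im, coe_re, coe_im]
  ring

lemma norm_cayley_lt_one (z : ℍ) : ‖cayley z‖ < 1 := by
  have h := one_sub_norm_cayley_sq z
  have : 0 < 4 * z.im / ‖(z : ℂ) + Complex.I‖ ^ 2 := by
    have := coe_add_I_ne_zero z; have := z.im_pos; positivity
  nlinarith [norm_nonneg (cayley z)]

lemma norm_cayley_eq_tanh (z : ℍ) : ‖cayley z‖ = Real.tanh (dist I z / 2) := by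
  rw [dist_comm, tanh_half_dist, cayley, norm_div]
  simp [Complex.dist_eq, sub_neg_eq_add]

lemma norm_cayley_sub_cayley (z w : ℍ) :
    ‖cayley z - cayley w‖
      = 2 * dist (z : ℂ) w / (‖(z : ℂ) + Complex.I‖ * ‖(w : ℂ) + Complex.I‖) := by
  have hz := coe_add_I_ne_zero z
  have hw := coe_add_I_ne_zero w
  rw [cayley, cayley, div_sub_div _ _ hz hw, Complex.dist_eq, norm_div, norm_mul,
    show ((z : ℂ) - Complex.I) * (w + Complex.I) - (z + Complex.I) * (w - Complex.I)
      = 2 * Complex.I * (z - w) by ring]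
  simp

lemma norm_one_sub_cayley_mul_conj (z w : ℍ) :
    ‖1 - cayley z * conj (cayley w)‖
      = 2 * dist (z : ℂ) (conj (w : ℂ)) / (‖(z : ℂ) + Complex.I‖ * ‖(w : ℂ) + Complex.I‖) := by
  have hz := coe_add_I_ne_zero z
  have hw : conj ((w : ℂ) + Complex.I) ≠ 0 := (map_ne_zero _).2 (coe_add_I_ne_zero w)
  have hconj : conj (cayley w) = (conj (w : ℂ) + Complex.I) / conj ((w : ℂ) + Complex.I) := by
    simp [cayley, map_div₀, sub_eq_add_neg]
  rw [hconj, cayley, div_mul_div_comm, one_sub_div (mul_ne_zero hz hw), Complex.dist_eq,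
    norm_div, norm_mul, Complex.norm_conj,
    show (z + Complex.I) * conj ((w : ℂ) + Complex.I)
        - (z - Complex.I) * (conj (w : ℂ) + Complex.I) = -(2 * Complex.I * (z - conj (w : ℂ))) by
      simp only [map_add, Complex.conj_I]; ring]
  simp

lemma exp_half_dist_eq_cayley (z w : ℍ) :
    Real.exp (dist z w / 2) = (‖cayley z - cayley w‖ + ‖1 - cayley z * conj (cayley w)‖)
      / √((1 - ‖cayley z‖ ^ 2) * (1 - ‖cayley w‖ ^ 2)) := by
  have hz := norm_pos_iff.2 (coe_add_I_ne_zero z)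
  have hw := norm_pos_iff.2 (coe_add_I_ne_zero w)
  have hsqrt : √((1 - ‖cayley z‖ ^ 2) * (1 - ‖cayley w‖ ^ 2))
      = 4 * √(z.im * w.im) / (‖(z : ℂ) + Complex.I‖ * ‖(w : ℂ) + Complex.I‖) := by
    rw [one_sub_norm_cayley_sq, one_sub_norm_cayley_sq, ← Real.sqrt_sq (by positivity :
      0 ≤ 4 * √(z.im * w.im) / (‖(z : ℂ) + Complex.I‖ * ‖(w : ℂ) + Complex.I‖)), div_pow,
      mul_pow, Real.sq_sqrt (mul_pos z.im_pos w.im_pos).le]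
    congr 1
    field_simp
  rw [exp_half_dist, hsqrt, norm_cayley_sub_cayley, norm_one_sub_cayley_mul_conj]
  field_simp
  ring

lemma norm_one_sub_cayley_mul_conj_pos (z w : ℍ) : 0 < ‖1 - cayley z * conj (cayley w)‖ := by
  refine norm_pos_iff.2 (sub_ne_zero.2 fun h => ?_)
  have := congrArg norm h
  rw [norm_one, norm_mul, Complex.norm_conj] at this
  nlinarith [norm_cayley_lt_one z, norm_cayley_lt_one w, norm_nonneg (cayley z),
    norm_nonneg (cayley w)]

lemma exp_half_gromovProduct_eq_cayley (z w : ℍ) :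
    Real.exp ((dist z I + dist I w - dist z w) / 2)
      = (1 + ‖cayley z‖) * (1 + ‖cayley w‖)
        / (‖cayley z - cayley w‖ + ‖1 - cayley z * conj (cayley w)‖) := by
  have hz : 0 < 1 - ‖cayley z‖ ^ 2 := by nlinarith [norm_cayley_lt_one z, norm_nonneg (cayley z)]
  have hw : 0 < 1 - ‖cayley w‖ ^ 2 := by nlinarith [norm_cayley_lt_one w, norm_nonneg (cayley w)]
  have hzw := norm_one_sub_cayley_mul_conj_pos z w
  rw [add_sub_right_comm, add_div, Real.exp_add, sub_div, Real.exp_sub,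
    exp_half_dist_eq_cayley z I, exp_half_dist_eq_cayley I w, exp_half_dist_eq_cayley z w]
  simp only [cayley_I, sub_zero, zero_sub, norm_neg, zero_mul, map_zero, mul_zero, norm_one,
    norm_zero, ne_eq, OfNat.ofNat_ne_zero, not_false_eq_true, zero_pow, one_mul, mul_one]
  rw [Real.sqrt_mul hz.le]
  have := Real.sqrt_pos.2 hz
  have := Real.sqrt_pos.2 hw
  field_simp
  ring

lemma norm_sub_cayley_pos {ζ : ℂ} (hζ : ‖ζ‖ = 1) (w : ℍ) : 0 < ‖ζ - cayley w‖ :=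
  norm_pos_iff.2 (sub_ne_zero.2 fun h => (norm_cayley_lt_one w).ne (h ▸ hζ : ‖cayley w‖ = 1))

lemma exists_subseq_tendsto_cayley {z : ℕ → ℍ}
    (hz : Tendsto (fun n => dist I (z n)) atTop atTop) :
    ∃ ζ : ℂ, ‖ζ‖ = 1 ∧
      ∃ φ : ℕ → ℕ, StrictMono φ ∧ Tendsto (fun n => cayley (z (φ n))) atTop (𝓝 ζ) := by
  obtain ⟨ζ, -, φ, hφ, hlim⟩ := (isCompact_closedBall (0 : ℂ) 1).tendsto_subseq
    (x := fun n => cayley (z n)) fun n => by simpa using (norm_cayley_lt_one (z n)).le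
  refine ⟨ζ, tendsto_nhds_unique hlim.norm ?_, φ, hφ, hlim⟩
  show Tendsto (fun n => ‖cayley (z (φ n))‖) atTop (𝓝 1)
  simp only [norm_cayley_eq_tanh]
  exact tendsto_tanh_atTop.comp ((hz.comp hφ.tendsto_atTop).atTop_div_const two_pos)

lemma exp_half_busemann_add_dist_eq {z : ℕ → ℍ} {ζ : ℂ} (hζ : ‖ζ‖ = 1)
    (hz : Tendsto (fun n => cayley (z n)) atTop (𝓝 ζ)) {w : ℍ} {b : ℝ}
    (hb : Tendsto (fun n => dist (z n) I - dist (z n) w) atTop (𝓝 b)) :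
    exp ((b + dist I w) / 2) = (1 + ‖cayley w‖) / ‖ζ - cayley w‖ := by
  have hζv := norm_sub_cayley_pos hζ w
  set v := cayley w
  have hconj : ‖1 - ζ * conj v‖ = ‖ζ - v‖ := by
    have hζζ : ζ * conj ζ = 1 := by
      rw [Complex.mul_conj, Complex.normSq_eq_norm_sq, hζ, one_pow, Complex.ofReal_one]
    rw [show 1 - ζ * conj v = ζ * conj (ζ - v) by rw [map_sub, mul_sub, hζζ], norm_mul,
      Complex.norm_conj, hζ, one_mul]
  set F : ℂ → ℝ := fun x => (1 + ‖x‖) * (1 + ‖v‖) / (‖x - v‖ + ‖1 - x * conj v‖)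
  have hF : ContinuousAt F ζ :=
    ContinuousAt.div (by fun_prop) (by fun_prop) (by positivity)
  have hFz : ∀ n, F (cayley (z n)) = exp ((dist (z n) I - dist (z n) w + dist I w) / 2) :=
    fun n => by rw [sub_add_eq_add_sub, exp_half_gromovProduct_eq_cayley]
  have hFζ : F ζ = (1 + ‖v‖) / ‖ζ - v‖ := by
    simp only [F, hζ, hconj]
    field_simp
  rw [← hFζ]
  refine tendsto_nhds_unique ?_ (hF.tendsto.comp hz)
  simpa only [Function.comp_def, hFz] using ((hb.add_const (dist I w)).div_const 2).rexp

end UpperHalfPlane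

/-- In the hyperbolic plane (upper half-plane model, base point `o = i`),
for every boundary horofunction `ξ` (a limit of `ξ_{z_n}(w) = d(z_n,o) - d(z_n,w)` with
`d(o,z_n) → ∞`, normalized `ξ(o) = 0`) and every `r > 0`, the set
`{z : ξ(z) + d(o,z) > r}` is contained in a cone at `o` of visual angle at most
`4 arctan((e^r - 1)^{-1/2})`.  The visual direction of `w` from `o = i` is recorded by
the argument of `(w - i)/(w + i)` (the Möbius map to the disk model sends geodesic rays
from `i` to radii), and the cone with axis direction `θ₀` and total angle `4 arctan(⋯)`
is the set of `w` whose direction makes angle at most `2 arctan(⋯)` with `θ₀`. -/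
theorem stmt9 (xi : UpperHalfPlane → ℝ)
    (hbdry : ∃ z : ℕ → UpperHalfPlane,
      Tendsto (fun n => dist UpperHalfPlane.I (z n)) atTop atTop ∧
      ∀ w : UpperHalfPlane,
        Tendsto (fun n => dist (z n) UpperHalfPlane.I - dist (z n) w) atTop (𝓝 (xi w))) :
    ∀ r : ℝ, 0 < r → ∃ θ₀ : ℝ, ∀ w : UpperHalfPlane,
      xi w + dist UpperHalfPlane.I w > r →
      |Complex.arg ((((w : ℂ) - Complex.I) / ((w : ℂ) + Complex.I)) *
          Complex.exp (-(θ₀ : ℂ) * Complex.I))|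
        ≤ 2 * Real.arctan (1 / Real.sqrt (Real.exp r - 1)) := by
  obtain ⟨z, hz, hxi⟩ := hbdry
  obtain ⟨ζ, hζ, φ, hφ, hζlim⟩ := UpperHalfPlane.exists_subseq_tendsto_cayley hz
  intro r hr
  refine ⟨Complex.arg ζ, fun w hw => ?_⟩
  have hbusemann := UpperHalfPlane.exp_half_busemann_add_dist_eq hζ hζlim
    ((hxi w).comp hφ.tendsto_atTop)
  have hrot : Complex.exp (-(Complex.arg ζ : ℂ) * Complex.I) = ζ⁻¹ := by
    rw [neg_mul, Complex.exp_neg]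
    simpa [hζ] using congrArg Inv.inv (Complex.norm_mul_exp_arg_mul_I ζ)
  change |Complex.arg (UpperHalfPlane.cayley w * _)| ≤ _
  rw [hrot, ← div_eq_mul_inv]
  refine abs_arg_div_le_of_norm_sub_mul_exp_le hζ hr ?_
  rw [← le_div_iff₀' (UpperHalfPlane.norm_sub_cayley_pos hζ w), ← hbusemann]
  exact exp_le_exp.2 (by linarith)
end

section
/- Let (M,d) be a geodesic proper metric space with base point o, let (x_n)_{n≤0} be a random sequence in M such that P(x_{−n} ∈ K) → 0 as n → ∞ for every bounded set K, and let μ_n = (1/n)∑_{i=1}^n δ_{ξ_{x_{−i}}} be the empirical measures on the horofunction compactification. If ν_n are convex averages of a subsequence of (μ_n) converging weakly a.s. to a random measure μ, then μ gives full mass to the horofunction boundary: for every bounded set K ⊂ M, E[μ({ξ_x : x ∈ K})] = 0. -/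
/-!
Fix `r > 0` with `K ⊆ B(o, r)` and let `U` be the set of continuous functions that stay below `r`
on the closed ball `B̄(o, r)`. It is open in the compact-open topology because `B̄(o, r)` is
compact, and `ξ_z ∈ U` for `z ∈ K`. Conversely, since `M` is geodesic, `ξ_w ∈ U` forces
`d(o, w) < r`: otherwise the point at distance `r` from `o` on a geodesic from `o` to `w` is a
point of `B̄(o, r)` where `ξ_w = r`. So `E[ν_k(U)]` is bounded by a Cesàro average of Cesàro
averages of `P(x_i ∈ B(o, r)) → 0`, and tends to `0`. The portmanteau theorem gives
`μ(U) ≤ liminf ν_k(U)` almost surely, and Fatou's lemma gives `E[μ(U)] = 0`.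
-/

open Filter Topology MeasureTheory
open scoped ENNReal

/-- The horofunction associated to `x` (base point `o`): `ξ_x(y) = d(x,o) - d(x,y)`,
as a continuous map `M → ℝ`; via `x ↦ ξ_x` the space `M` embeds in its horofunction
compactification (a subset of `C(M,ℝ)` with the compact-open topology). -/
noncomputable def horo {M : Type*} [MetricSpace M] (o x : M) : C(M, ℝ) :=
  ⟨fun y => dist x o - dist x y, by fun_prop⟩

open Metric Set

theorem ENNReal.tendsto_cesaro_zero {u : ℕ → ℝ≥0∞} (hu : ∀ n, u n ≠ ∞)
    (h : Tendsto u atTop (𝓝 0)) :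
    Tendsto (fun n : ℕ => (n : ℝ≥0∞)⁻¹ * ∑ i ∈ Finset.range n, u i) atTop (𝓝 0) := by
  have hreal : Tendsto (fun n : ℕ => (n : ℝ)⁻¹ * ∑ i ∈ Finset.range n, (u i).toReal)
      atTop (𝓝 0) := by
    simpa using ((ENNReal.tendsto_toReal ENNReal.zero_ne_top).comp h).cesaro
  have hofReal := ENNReal.tendsto_ofReal hreal
  rw [ENNReal.ofReal_zero] at hofReal
  refine hofReal.congr' ?_
  filter_upwards [eventually_ne_atTop 0] with n hn
  rw [ENNReal.ofReal_mul (by positivity), ENNReal.ofReal_inv_of_pos (by positivity),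
    ENNReal.ofReal_natCast, ENNReal.ofReal_sum_of_nonneg fun _ _ => ENNReal.toReal_nonneg]
  simp only [ENNReal.ofReal_toReal (hu _)]

theorem ENNReal.tendsto_cesaro_Icc_zero {u : ℕ → ℝ≥0∞} (hu : ∀ n, u n ≠ ∞)
    (h : Tendsto u atTop (𝓝 0)) :
    Tendsto (fun n : ℕ => (n : ℝ≥0∞)⁻¹ * ∑ i ∈ Finset.Icc 1 n, u i) atTop (𝓝 0) := by
  have hshift : ∀ n, ∑ i ∈ Finset.Icc 1 n, u i = ∑ i ∈ Finset.range n, u (i + 1) := by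
    intro n
    rw [← Finset.Ico_add_one_right_eq_Icc, Finset.sum_Ico_eq_sum_range]
    simp [add_comm]
  simpa only [hshift] using
    ENNReal.tendsto_cesaro_zero (fun n => hu (n + 1)) (h.comp (tendsto_add_atTop_nat 1))

theorem ENNReal.inv_mul_sum_ne_top {ι : Type*} (s : Finset ι) {n : ℕ} (hn : n ≠ 0)
    {u : ι → ℝ≥0∞} (hu : ∀ i ∈ s, u i ≠ ∞) : (n : ℝ≥0∞)⁻¹ * ∑ i ∈ s, u i ≠ ∞ :=
  ENNReal.mul_ne_top (by simpa using hn) (ENNReal.sum_ne_top.2 hu)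

section Horofunction

variable {M : Type*} [MetricSpace M]

def ltOnClosedBall (o : M) (r : ℝ) : Set C(M, ℝ) :=
  {f | MapsTo f (closedBall o r) (Iio r)}

theorem isOpen_ltOnClosedBall [ProperSpace M] (o : M) (r : ℝ) : IsOpen (ltOnClosedBall o r) :=
  ContinuousMap.isOpen_setOfPred_mapsTo (isCompact_closedBall o r) isOpen_Iio

theorem horo_mem_ltOnClosedBall_iff
    (hgeo : ∀ a b : M, ∀ t : ℝ, 0 ≤ t → t ≤ dist a b →
      ∃ z : M, dist a z = t ∧ dist z b = dist a b - t)
    {o w : M} {r : ℝ} (hr : 0 ≤ r) : horo o w ∈ ltOnClosedBall o r ↔ w ∈ ball o r := by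
  constructor
  · intro hw
    by_contra hwr
    obtain ⟨z, hoz, hzw⟩ := hgeo o w r hr (by simpa [dist_comm] using hwr)
    have : dist w o - dist w z < r := hw (by rw [mem_closedBall, dist_comm, hoz])
    rw [dist_comm w o, dist_comm w z, hzw] at this
    linarith
  · intro hw y _
    have : dist w o < r := hw
    show dist w o - dist w y < r
    linarith [dist_nonneg (x := w) (y := y)]

end Horofunction

theorem MeasureTheory.Measure.smul_finsetSum_apply_le {X ι : Type*} [MeasurableSpace X]
    (c : ℝ≥0∞) (s : Finset ι) (ρ : ι → Measure X) {g : ι → ℝ≥0∞} {U : Set X}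
    (h : ∀ i ∈ s, ρ i U ≤ g i) :
    (c • ∑ i ∈ s, ρ i) U ≤ c * ∑ i ∈ s, g i := by
  rw [Measure.smul_apply, Measure.finsetSum_apply, smul_eq_mul]
  gcongr with i hi
  exact h i hi

theorem isProbabilityMeasure_inv_smul_finsetSum {X ι : Type*} [MeasurableSpace X]
    {s : Finset ι} {n : ℕ} (hs : s.card = n) (hn : n ≠ 0) (ρ : ι → Measure X)
    (hρ : ∀ i ∈ s, IsProbabilityMeasure (ρ i)) :
    IsProbabilityMeasure ((n : ℝ≥0∞)⁻¹ • ∑ i ∈ s, ρ i) := by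
  constructor
  rw [Measure.smul_apply, Measure.finsetSum_apply,
    Finset.sum_congr rfl fun i hi => (hρ i hi).measure_univ]
  simp [hs, ENNReal.inv_mul_cancel (Nat.cast_ne_zero.2 hn)]

theorem lintegral_const_mul_finsetSum {Ω ι : Type*} [MeasurableSpace Ω] (P : Measure Ω)
    (c : ℝ≥0∞) (s : Finset ι) {g : ι → Ω → ℝ≥0∞} (hg : ∀ i, Measurable (g i)) :
    ∫⁻ ω, c * ∑ i ∈ s, g i ω ∂P = c * ∑ i ∈ s, ∫⁻ ω, g i ω ∂P := by
  rw [lintegral_const_mul _ (Finset.measurable_sum _ fun i _ => hg i),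
    lintegral_finsetSum _ fun i _ => hg i]

theorem le_liminf_measure_open_of_forall_tendsto_integral {X : Type*} [MeasurableSpace X]
    [TopologicalSpace X] [OpensMeasurableSpace X] [HasOuterApproxClosed X]
    {μ : Measure X} [IsProbabilityMeasure μ] {μs : ℕ → Measure X}
    [hμs : ∀ k, IsProbabilityMeasure (μs k)]
    (h : ∀ f : BoundedContinuousFunction X ℝ,
      Tendsto (fun k => ∫ x, f x ∂μs k) atTop (𝓝 (∫ x, f x ∂μ)))
    {G : Set X} (hG : IsOpen G) : μ G ≤ atTop.liminf fun k => μs k G :=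
  ProbabilityMeasure.le_liminf_measure_open_of_tendsto (μ := ⟨μ, inferInstance⟩)
    (μs := fun k => ⟨μs k, hμs k⟩)
    (ProbabilityMeasure.tendsto_iff_forall_integral_tendsto.2 h) hG

theorem tendsto_lintegral_cesaro_zero {Ω : Type*} [MeasurableSpace Ω] {P : Measure Ω}
    {A : ℕ → Ω → ℝ≥0∞} (hA : ∀ n, Measurable (A n)) (hfin : ∀ n, ∫⁻ ω, A n ω ∂P ≠ ∞)
    (h : Tendsto (fun n => ∫⁻ ω, A n ω ∂P) atTop (𝓝 0)) :
    Tendsto (fun n : ℕ => ∫⁻ ω, (n : ℝ≥0∞)⁻¹ * ∑ j ∈ Finset.range n, A j ω ∂P) atTop (𝓝 0) := by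
  simpa only [lintegral_const_mul_finsetSum P _ _ hA] using ENNReal.tendsto_cesaro_zero hfin h

section HitAverage

variable {Ω X : Type*} [MeasurableSpace Ω] (P : Measure Ω)
  (f : ℕ → Ω → X) (U : Set X)

/-- A measurable majorant of `ω ↦ ((1/n) ∑_{i=1}^n δ_{f i ω}) U`; the `f i` are not assumed
measurable. -/
noncomputable def hitAverage (n : ℕ) (ω : Ω) : ℝ≥0∞ :=
  (n : ℝ≥0∞)⁻¹ * ∑ i ∈ Finset.Icc 1 n, (toMeasurable P {ω | f i ω ∈ U}).indicator 1 ω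

theorem measurable_hitAverage (n : ℕ) : Measurable (hitAverage P f U n) :=
  (Finset.measurable_sum _ fun _ _ =>
    measurable_one.indicator (measurableSet_toMeasurable P _)).const_mul _

theorem dirac_apply_le_indicator_toMeasurable [MeasurableSpace X] {g : Ω → X}
    (hU : MeasurableSet U) (ω : Ω) :
    Measure.dirac (g ω) U ≤ (toMeasurable P {ω | g ω ∈ U}).indicator 1 ω := by
  rw [Measure.dirac_apply' _ hU]
  by_cases h : g ω ∈ U
  · simp [h, subset_toMeasurable P {ω | g ω ∈ U} h]
  · simp [h]

theorem inv_smul_sum_dirac_apply_le_hitAverage [MeasurableSpace X] (hU : MeasurableSet U)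
    (n : ℕ) (ω : Ω) :
    ((n : ℝ≥0∞)⁻¹ • ∑ i ∈ Finset.Icc 1 n, Measure.dirac (f i ω)) U ≤ hitAverage P f U n ω :=
  Measure.smul_finsetSum_apply_le _ _ _ fun _ _ =>
    dirac_apply_le_indicator_toMeasurable P U hU ω

theorem lintegral_hitAverage (n : ℕ) :
    ∫⁻ ω, hitAverage P f U n ω ∂P
      = (n : ℝ≥0∞)⁻¹ * ∑ i ∈ Finset.Icc 1 n, P {ω | f i ω ∈ U} := by
  simp only [hitAverage]
  rw [lintegral_const_mul_finsetSum P _ _ fun i =>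
    measurable_one.indicator (measurableSet_toMeasurable P _)]
  simp only [lintegral_indicator_one (measurableSet_toMeasurable P _), measure_toMeasurable]

theorem lintegral_hitAverage_ne_top [IsFiniteMeasure P] {n : ℕ} (hn : n ≠ 0) :
    ∫⁻ ω, hitAverage P f U n ω ∂P ≠ ∞ := by
  rw [lintegral_hitAverage]
  exact ENNReal.inv_mul_sum_ne_top _ hn fun _ _ => measure_ne_top _ _

theorem tendsto_lintegral_hitAverage [IsFiniteMeasure P]
    (h : Tendsto (fun i => P {ω | f i ω ∈ U}) atTop (𝓝 0)) :
    Tendsto (fun n => ∫⁻ ω, hitAverage P f U n ω ∂P) atTop (𝓝 0) := by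
  simpa only [lintegral_hitAverage] using
    ENNReal.tendsto_cesaro_Icc_zero (fun _ => measure_ne_top _ _) h

theorem tendsto_lintegral_cesaro_hitAverage [IsFiniteMeasure P] {ns : ℕ → ℕ}
    (hns : StrictMono ns) (hns0 : ∀ j, ns j ≠ 0)
    (h : Tendsto (fun i => P {ω | f i ω ∈ U}) atTop (𝓝 0)) :
    Tendsto (fun k : ℕ => ∫⁻ ω, (k : ℝ≥0∞)⁻¹ * ∑ j ∈ Finset.range k, hitAverage P f U (ns j) ω ∂P)
      atTop (𝓝 0) :=
  tendsto_lintegral_cesaro_zero (fun j => measurable_hitAverage P f U (ns j))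
    (fun j => lintegral_hitAverage_ne_top P f U (hns0 j))
    ((tendsto_lintegral_hitAverage P f U h).comp hns.tendsto_atTop)

end HitAverage

/-- Portmanteau plus Fatou: mass on an open set can only be lost in an a.s. weak limit. -/
theorem lintegral_measure_eq_zero_of_tendsto_lintegral_majorant {Ω X : Type*}
    [MeasurableSpace Ω] {P : Measure Ω} [MeasurableSpace X] [TopologicalSpace X]
    [OpensMeasurableSpace X] [HasOuterApproxClosed X]
    {μ : Ω → Measure X} (hμ : ∀ ω, IsProbabilityMeasure (μ ω))
    {μs : ℕ → Ω → Measure X} (hμs : ∀ k ω, IsProbabilityMeasure (μs k ω))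
    (hconv : ∀ᵐ ω ∂P, ∀ f : BoundedContinuousFunction X ℝ,
      Tendsto (fun k => ∫ x, f x ∂μs k ω) atTop (𝓝 (∫ x, f x ∂μ ω)))
    {U : Set X} (hU : IsOpen U) {G : ℕ → Ω → ℝ≥0∞} (hG : ∀ k, Measurable (G k))
    (hle : ∀ k ω, μs k ω U ≤ G k ω) (hG0 : Tendsto (fun k => ∫⁻ ω, G k ω ∂P) atTop (𝓝 0)) :
    ∫⁻ ω, μ ω U ∂P = 0 := by
  refine le_antisymm ?_ zero_le
  calc ∫⁻ ω, μ ω U ∂P ≤ ∫⁻ ω, atTop.liminf (fun k => G k ω) ∂P := by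
        refine lintegral_mono_ae (hconv.mono fun ω hω => ?_)
        have := hμ ω
        have := (hμs · ω)
        exact (le_liminf_measure_open_of_forall_tendsto_integral hω hU).trans
          (liminf_le_liminf (.of_forall (hle · ω)))
    _ ≤ atTop.liminf fun k => ∫⁻ ω, G k ω ∂P := lintegral_liminf_le hG
    _ = 0 := hG0.liminf_eq

/-- Let `(M,d)` be a geodesic proper metric space with base point `o`,
`(x_{-i})_{i≥1}` a random sequence in `M` with `P(x_{-i} ∈ K) → 0` for every bounded `K`,
and `μ_n = (1/n) ∑_{i=1}^n δ_{ξ_{x_{-i}}}` the empirical measures on the horofunction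
compactification (inside `C(M,ℝ)`).  If `ν_k = (1/k) ∑_{j=1}^k μ_{n_j}` are convex
averages of a subsequence of `(μ_n)` converging weakly a.s. to a random measure `μ`,
then `μ` gives full mass to the horofunction boundary: `E[μ({ξ_z : z ∈ K})] = 0` for
every bounded `K ⊆ M`. -/
theorem stmt16 {Ω : Type*} [MeasurableSpace Ω] (P : Measure Ω) [IsProbabilityMeasure P]
    {M : Type*} [MetricSpace M] [ProperSpace M]
    [MeasurableSpace C(M, ℝ)] [BorelSpace C(M, ℝ)]
    (hgeo : ∀ a b : M, ∀ t : ℝ, 0 ≤ t → t ≤ dist a b →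
      ∃ z : M, dist a z = t ∧ dist z b = dist a b - t)
    (o : M) (x : ℕ → Ω → M)
    (hx : ∀ K : Set M, Bornology.IsBounded K →
      Tendsto (fun n => P {ω | x n ω ∈ K}) atTop (𝓝 0))
    (ns : ℕ → ℕ) (hns : StrictMono ns) (hns1 : ∀ j, 1 ≤ ns j)
    (emp : ℕ → Ω → Measure C(M, ℝ))
    (hemp : ∀ n ω, emp n ω
      = ((n : ℝ≥0∞))⁻¹ • ∑ i ∈ Finset.Icc 1 n, Measure.dirac (horo o (x i ω)))
    (ν : ℕ → Ω → Measure C(M, ℝ))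
    (hν : ∀ k ω, ν k ω = ((k : ℝ≥0∞))⁻¹ • ∑ j ∈ Finset.range k, emp (ns j) ω)
    (μ : Ω → Measure C(M, ℝ)) (hμprob : ∀ ω, IsProbabilityMeasure (μ ω))
    (hconv : ∀ᵐ ω ∂P, ∀ f : BoundedContinuousFunction C(M, ℝ) ℝ,
      Tendsto (fun k : ℕ => ∫ ξ, f ξ ∂(ν k ω)) atTop (𝓝 (∫ ξ, f ξ ∂(μ ω)))) :
    ∀ K : Set M, Bornology.IsBounded K →
      ∫⁻ ω, μ ω ((fun z => horo o z) '' K) ∂P = 0 := by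
  intro K hK
  obtain ⟨r, hr, hKr⟩ := hK.subset_ball_lt 0 o
  set U := ltOnClosedBall o r
  have hU : IsOpen U := isOpen_ltOnClosedBall o r
  have hpre (w : M) : horo o w ∈ U ↔ w ∈ ball o r := horo_mem_ltOnClosedBall_iff hgeo hr.le
  have hns0 (j : ℕ) : ns j ≠ 0 := Nat.one_le_iff_ne_zero.1 (hns1 j)
  set f : ℕ → Ω → C(M, ℝ) := fun i ω => horo o (x i ω)
  set G : ℕ → Ω → ℝ≥0∞ := fun k ω =>
    (k : ℝ≥0∞)⁻¹ * ∑ j ∈ Finset.range k, hitAverage P f U (ns j) ω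
  -- `ν 0 ω = 0`, so the portmanteau step uses the shifted sequence `ν (k + 1) ω`.
  have hν_prob (k : ℕ) (ω : Ω) : IsProbabilityMeasure (ν (k + 1) ω) := by
    rw [hν]
    exact isProbabilityMeasure_inv_smul_finsetSum (by simp) k.succ_ne_zero _ fun j _ =>
      hemp (ns j) ω ▸ isProbabilityMeasure_inv_smul_finsetSum (by simp) (hns0 j) _ fun _ _ =>
        Measure.dirac.isProbabilityMeasure
  have hν_le (k : ℕ) (ω : Ω) : ν k ω U ≤ G k ω := by
    rw [hν]
    exact Measure.smul_finsetSum_apply_le _ _ _ fun j _ =>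
      hemp (ns j) ω ▸ inv_smul_sum_dirac_apply_le_hitAverage P f U hU.measurableSet (ns j) ω
  have hG0 : Tendsto (fun k => ∫⁻ ω, G k ω ∂P) atTop (𝓝 0) :=
    tendsto_lintegral_cesaro_hitAverage P f U hns hns0
      (by simpa only [f, hpre] using hx _ isBounded_ball)
  have hμU : ∫⁻ ω, μ ω U ∂P = 0 :=
    lintegral_measure_eq_zero_of_tendsto_lintegral_majorant hμprob hν_prob
      (hconv.mono fun ω hω g => (hω g).comp (tendsto_add_atTop_nat 1)) hU
      (fun k => (Finset.measurable_sum _ fun j _ => measurable_hitAverage P f U _).const_mul _)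
      (fun k => hν_le (k + 1)) (hG0.comp (tendsto_add_atTop_nat 1))
  refine nonpos_iff_eq_zero.1 (le_of_le_of_eq (lintegral_mono fun ω => measure_mono ?_) hμU)
  exact image_subset_iff.2 fun z hz => (hpre z).2 (hKr hz)
end
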